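/- arXiv:2105.01231 — 2 statements merged into one kernel-verified Lean document; each statement's English description precedes it below -/
import Mathlib

section
/- Let f₁,…,f_m : ℝ^p → ℝ be differentiable with L-Lipschitz gradients, and let f = (1/m)∑_{i=1}^m f_i (which is then also L-smooth). For any points x₁,…,x_m ∈ ℝ^p with average x̄ = (1/m)∑_{i=1}^m x_i, any v̄ ∈ ℝ^p, and any η ≥ 0, setting ḡ = (1/m)∑_{i=1}^m ∇f_i(x_i) and x̄⁺ = x̄ − η v̄, one has: f(x̄⁺) ≤ f(x̄) − (η/2)‖∇f(x̄)‖² − (η/2 − Lη²/2)‖v̄‖² + η ‖v̄ − ḡ‖² + (L²η/m) ∑_{i=1}^m ‖x_i − x̄‖². -/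
set_option autoImplicit false

open Finset InnerProductSpace

/-!
The standard descent lemma for the `L`-smooth average `F` gives
`F(x̄ - ηv̄) ≤ F(x̄) - η⟪∇F(x̄), v̄⟫ + (Lη²/2)‖v̄‖²`. Polarizing the inner product turns the middle
term into `-(η/2)(‖∇F(x̄)‖² + ‖v̄‖² - ‖v̄ - ∇F(x̄)‖²)`, and the error `‖v̄ - ∇F(x̄)‖²` is split at `ḡ`
into `2‖v̄ - ḡ‖² + 2‖ḡ - ∇F(x̄)‖²`. The last term is the square of an average of the gradient
differences `gᵢ(xᵢ) - gᵢ(x̄)`, hence at most `(L²/m)∑‖xᵢ - x̄‖²` by Cauchy–Schwarz.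
-/

section Smooth

variable {E : Type*} [NormedAddCommGroup E] [InnerProductSpace ℝ E] [CompleteSpace E]

theorem HasGradientAt.const_mul_sum {ι : Type*} (s : Finset ι) {f : ι → E → ℝ} {f' : ι → E}
    {x : E} (c : ℝ) (h : ∀ i ∈ s, HasGradientAt (f i) (f' i) x) :
    HasGradientAt (fun y => c * ∑ i ∈ s, f i y) (c • ∑ i ∈ s, f' i) x := by
  rw [hasGradientAt_iff_hasFDerivAt, map_smul, map_sum]
  exact (HasFDerivAt.fun_sum fun i hi => (h i hi).hasFDerivAt).const_mul c

variable {F : E → ℝ} {G : E → E} {L : ℝ}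

theorem le_add_inner_add_sq_of_lipschitz_gradient (hF : ∀ y, HasGradientAt F (G y) y)
    (hG : ∀ a b, ‖G a - G b‖ ≤ L * ‖a - b‖) (x y : E) :
    F y ≤ F x + ⟪G x, y - x⟫_ℝ + L / 2 * ‖y - x‖ ^ 2 := by
  set d := y - x
  -- `φ t` is the gap between `F` and the claimed quadratic majorant along the segment `[x, y]`.
  set φ : ℝ → ℝ := fun t => F (x + t • d) - t * ⟪G x, d⟫_ℝ - L / 2 * t ^ 2 * ‖d‖ ^ 2
  have hφ : ∀ t, HasDerivAt φ (⟪G (x + t • d), d⟫_ℝ - ⟪G x, d⟫_ℝ - L * t * ‖d‖ ^ 2) t := by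
    intro t
    have hline : HasDerivAt (fun t : ℝ => x + t • d) d t := by
      simpa using ((hasDerivAt_id t).smul_const d).const_add x
    have hquad := ((hasDerivAt_pow 2 t).const_mul (L / 2)).mul_const (‖d‖ ^ 2)
    refine ((((hF _).hasFDerivAt.comp_hasDerivAt t hline).sub
      ((hasDerivAt_id t).mul_const ⟪G x, d⟫_ℝ)).sub hquad).congr_deriv ?_
    rw [toDual_apply_apply]
    ring
  have hφ' : ∀ t ∈ interior (Set.Icc (0 : ℝ) 1), deriv φ t ≤ 0 := by
    intro t ht
    rw [interior_Icc] at ht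
    have hGt : ⟪G (x + t • d) - G x, d⟫_ℝ ≤ L * t * ‖d‖ ^ 2 :=
      calc ⟪G (x + t • d) - G x, d⟫_ℝ
          ≤ ‖G (x + t • d) - G x‖ * ‖d‖ := real_inner_le_norm _ _
        _ ≤ L * ‖t • d‖ * ‖d‖ := by
          gcongr
          simpa using hG (x + t • d) x
        _ = L * t * ‖d‖ ^ 2 := by rw [norm_smul, Real.norm_of_nonneg ht.1.le]; ring
    rw [(hφ t).deriv, ← inner_sub_left]
    linarith
  have hφ_anti : AntitoneOn φ (Set.Icc 0 1) :=
    antitoneOn_of_deriv_nonpos (convex_Icc 0 1)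
      (continuous_iff_continuousAt.2 fun t => (hφ t).continuousAt).continuousOn
      (fun t _ => (hφ t).differentiableAt.differentiableWithinAt) hφ'
  have h10 : φ 1 ≤ φ 0 := hφ_anti (by simp) (by simp) zero_le_one
  simp only [φ, d, one_smul, zero_smul, add_zero, add_sub_cancel, one_pow, zero_pow two_ne_zero,
    mul_zero, zero_mul, mul_one, one_mul, sub_zero] at h10
  linarith

theorem le_sub_sq_norm_gradient_of_lipschitz_gradient (hF : ∀ y, HasGradientAt F (G y) y)
    (hG : ∀ a b, ‖G a - G b‖ ≤ L * ‖a - b‖) (x v : E) (η : ℝ) :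
    F (x - η • v) ≤ F x - η / 2 * ‖G x‖ ^ 2 - (η / 2 - L * η ^ 2 / 2) * ‖v‖ ^ 2
      + η / 2 * ‖v - G x‖ ^ 2 := by
  have hdescent := le_add_inner_add_sq_of_lipschitz_gradient hF hG x (x - η • v)
  rw [sub_sub_cancel_left, inner_neg_right, real_inner_smul_right, norm_neg, norm_smul, mul_pow,
    Real.norm_eq_abs, sq_abs] at hdescent
  have hpolar := norm_sub_sq_real v (G x)
  rw [real_inner_comm] at hpolar
  rw [hpolar]
  linarith

end Smooth

section Average

variable {E : Type*} [SeminormedAddCommGroup E] [NormedSpace ℝ E] {m : ℕ}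

theorem norm_inv_smul_sum_le (a : Fin m → E) :
    ‖(m : ℝ)⁻¹ • ∑ i, a i‖ ≤ (m : ℝ)⁻¹ * ∑ i, ‖a i‖ := by
  rw [norm_smul, norm_inv, Real.norm_natCast]
  gcongr
  exact norm_sum_le _ _

theorem norm_inv_smul_sum_le_of_norm_le (hm : m ≠ 0) {a : Fin m → E} {B : ℝ}
    (ha : ∀ i, ‖a i‖ ≤ B) : ‖(m : ℝ)⁻¹ • ∑ i, a i‖ ≤ B :=
  calc ‖(m : ℝ)⁻¹ • ∑ i, a i‖ ≤ (m : ℝ)⁻¹ * ∑ i, ‖a i‖ := norm_inv_smul_sum_le a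
    _ ≤ (m : ℝ)⁻¹ * ∑ _i : Fin m, B := by gcongr with i; exact ha i
    _ = B := by simp [hm]

theorem sq_norm_inv_smul_sum_le (a : Fin m → E) :
    ‖(m : ℝ)⁻¹ • ∑ i, a i‖ ^ 2 ≤ (m : ℝ)⁻¹ * ∑ i, ‖a i‖ ^ 2 := by
  rcases Nat.eq_zero_or_pos m with rfl | hm
  · simp
  calc ‖(m : ℝ)⁻¹ • ∑ i, a i‖ ^ 2 ≤ ((m : ℝ)⁻¹ * ∑ i, ‖a i‖) ^ 2 := by
        gcongr; exact norm_inv_smul_sum_le a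
    _ ≤ (m : ℝ)⁻¹ ^ 2 * (m * ∑ i, ‖a i‖ ^ 2) := by
        rw [mul_pow]; gcongr; simpa using sq_sum_le_card_mul_sum_sq (s := univ) (f := (‖a ·‖))
    _ = (m : ℝ)⁻¹ * ∑ i, ‖a i‖ ^ 2 := by field_simp

theorem sq_norm_inv_smul_sum_sub_le {X : Type*} [SeminormedAddCommGroup X] {g : Fin m → X → E}
    {L : ℝ} (hg : ∀ i x y, ‖g i x - g i y‖ ≤ L * ‖x - y‖) (x : Fin m → X) (z : X) :
    ‖(m : ℝ)⁻¹ • ∑ i, g i (x i) - (m : ℝ)⁻¹ • ∑ i, g i z‖ ^ 2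
      ≤ L ^ 2 / m * ∑ i, ‖x i - z‖ ^ 2 := by
  rw [← smul_sub, ← sum_sub_distrib]
  calc _ ≤ (m : ℝ)⁻¹ * ∑ i, ‖g i (x i) - g i z‖ ^ 2 := sq_norm_inv_smul_sum_le _
    _ ≤ (m : ℝ)⁻¹ * ∑ i, (L * ‖x i - z‖) ^ 2 := by
        gcongr with i; exact hg i (x i) z
    _ = L ^ 2 / m * ∑ i, ‖x i - z‖ ^ 2 := by simp only [mul_pow, ← mul_sum]; ring

end Average

theorem gt_storm_descent_lemma_general
    (m p : ℕ) (hm : 1 ≤ m) (L : ℝ)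
    (f : Fin m → EuclideanSpace ℝ (Fin p) → ℝ)
    (g : Fin m → EuclideanSpace ℝ (Fin p) → EuclideanSpace ℝ (Fin p))
    (hgrad : ∀ i x, HasGradientAt (f i) (g i x) x)
    (hlip : ∀ i x y, ‖g i x - g i y‖ ≤ L * ‖x - y‖)
    (F : EuclideanSpace ℝ (Fin p) → ℝ)
    (hF : ∀ y, F y = (m : ℝ)⁻¹ * ∑ i, f i y)
    (x : Fin m → EuclideanSpace ℝ (Fin p))
    (xbar : EuclideanSpace ℝ (Fin p))
    (vbar : EuclideanSpace ℝ (Fin p))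
    (η : ℝ) (hη : 0 ≤ η)
    (gbar : EuclideanSpace ℝ (Fin p))
    (hgbar : gbar = (m : ℝ)⁻¹ • ∑ i, g i (x i))
    (xbarplus : EuclideanSpace ℝ (Fin p))
    (hxbarplus : xbarplus = xbar - η • vbar) :
    F xbarplus
      ≤ F xbar - (η / 2) * ‖(m : ℝ)⁻¹ • ∑ i, g i xbar‖ ^ 2
        - (η / 2 - L * η ^ 2 / 2) * ‖vbar‖ ^ 2
        + η * ‖vbar - gbar‖ ^ 2
        + (L ^ 2 * η / m) * ∑ i, ‖x i - xbar‖ ^ 2 := by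
  set G := fun y => (m : ℝ)⁻¹ • ∑ i, g i y
  have hFG : ∀ y, HasGradientAt F (G y) y := fun y => by
    rw [show F = fun y => (m : ℝ)⁻¹ * ∑ i, f i y from funext hF]
    exact HasGradientAt.const_mul_sum _ _ fun i _ => hgrad i y
  have hGlip : ∀ a b, ‖G a - G b‖ ≤ L * ‖a - b‖ := fun a b => by
    simp only [G, ← smul_sub, ← sum_sub_distrib]
    exact norm_inv_smul_sum_le_of_norm_le (by omega) fun i => hlip i a b
  have hstep := le_sub_sq_norm_gradient_of_lipschitz_gradient hFG hGlip xbar vbar η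
  have htracking : ‖gbar - G xbar‖ ^ 2 ≤ L ^ 2 / m * ∑ i, ‖x i - xbar‖ ^ 2 :=
    hgbar ▸ sq_norm_inv_smul_sum_sub_le hlip x xbar
  have hsplit : ‖vbar - G xbar‖ ^ 2 ≤ 2 * (‖vbar - gbar‖ ^ 2 + ‖gbar - G xbar‖ ^ 2) :=
    (pow_le_pow_left₀ (norm_nonneg _) (norm_sub_le_norm_sub_add_norm_sub _ _ _) 2).trans
      (add_sq_le ..)
  have hη_tracking := mul_le_mul_of_nonneg_left htracking hη
  have hη_split := mul_le_mul_of_nonneg_left hsplit hη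
  have hcoeff : L ^ 2 * η / m * ∑ i, ‖x i - xbar‖ ^ 2
      = η * (L ^ 2 / m * ∑ i, ‖x i - xbar‖ ^ 2) := by ring
  rw [hxbarplus, hcoeff]
  linarith

/-- **Descent Lemma, deterministic form of Lemma 2.**
Let `f₁,…,f_m : ℝ^p → ℝ` be differentiable with `L`-Lipschitz gradients `g₁,…,g_m`, and let
`f = (1/m)∑ᵢ fᵢ` (whose gradient at `y` is `(1/m)∑ᵢ gᵢ(y)`).  For any points `x₁,…,x_m` with
average `x̄`, any `v̄ ∈ ℝ^p` and any `η ≥ 0`, setting `ḡ = (1/m)∑ᵢ gᵢ(xᵢ)` and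
`x̄⁺ = x̄ − η v̄`, one has
`f(x̄⁺) ≤ f(x̄) − (η/2)‖∇f(x̄)‖² − (η/2 − Lη²/2)‖v̄‖² + η‖v̄ − ḡ‖² + (L²η/m)∑ᵢ‖xᵢ − x̄‖²`. -/
theorem gt_storm_descent_lemma
    (m p : ℕ) (hm : 1 ≤ m) (L : ℝ) (hL : 0 < L)
    (f : Fin m → EuclideanSpace ℝ (Fin p) → ℝ)
    (g : Fin m → EuclideanSpace ℝ (Fin p) → EuclideanSpace ℝ (Fin p))
    (hgrad : ∀ i x, HasGradientAt (f i) (g i x) x)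
    (hlip : ∀ i x y, ‖g i x - g i y‖ ≤ L * ‖x - y‖)
    (F : EuclideanSpace ℝ (Fin p) → ℝ)
    (hF : ∀ y, F y = (m : ℝ)⁻¹ * ∑ i, f i y)
    (x : Fin m → EuclideanSpace ℝ (Fin p))
    (xbar : EuclideanSpace ℝ (Fin p))
    (hxbar : xbar = (m : ℝ)⁻¹ • ∑ i, x i)
    (vbar : EuclideanSpace ℝ (Fin p))
    (η : ℝ) (hη : 0 ≤ η)
    (gbar : EuclideanSpace ℝ (Fin p))
    (hgbar : gbar = (m : ℝ)⁻¹ • ∑ i, g i (x i))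
    (xbarplus : EuclideanSpace ℝ (Fin p))
    (hxbarplus : xbarplus = xbar - η • vbar) :
    F xbarplus
      ≤ F xbar - (η / 2) * ‖(m : ℝ)⁻¹ • ∑ i, g i xbar‖ ^ 2
        - (η / 2 - L * η ^ 2 / 2) * ‖vbar‖ ^ 2
        + η * ‖vbar - gbar‖ ^ 2
        + (L ^ 2 * η / m) * ∑ i, ‖x i - xbar‖ ^ 2 :=
  gt_storm_descent_lemma_general m p hm L f g hgrad hlip F hF x xbar vbar η hη gbar hgbar xbarplus
    hxbarplus
end

section
/- Let (Ω, F, P) be a probability space and ζ₁,…,ζ_m mutually independent random elements with ζ_i distributed according to D_i. Let f_i(·;ζ) : ℝ^p → ℝ be differentiable in x for each sample ζ, with f_i(x) = E_{ζ∼D_i}[f_i(x;ζ)] and ∇f_i(x) = E_{ζ∼D_i}[∇f_i(x;ζ)], and assume: (bounded variance) E_{ζ∼D_i}‖∇f_i(x;ζ) − ∇f_i(x)‖² ≤ σ² for all x and i; (L-average smoothness) E_{ζ∼D_i}‖∇f_i(x;ζ) − ∇f_i(y;ζ)‖² ≤ L²‖x − y‖² for all x, y and i. Fix deterministic points x_{i,t−1},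 x_{i,t} ∈ ℝ^p (i = 1,…,m), a deterministic vector v̄_{t−1} ∈ ℝ^p, and β ∈ [0,1]. Define u_i = ∇f_i(x_{i,t}; ζ_i), w_i = ∇f_i(x_{i,t}; ζ_i) − ∇f_i(x_{i,t−1}; ζ_i), their averages ū = (1/m)∑u_i, w̄ = (1/m)∑w_i, the deterministic averages ḡ_t = (1/m)∑_i ∇f_i(x_{i,t}), ḡ_{t−1} = (1/m)∑_i ∇f_i(x_{i,t−1}), and v̄_t = β(v̄_{t−1} + w̄) + (1−β)ū. Then E‖v̄_t − ḡ_t‖² ≤ β² ‖v̄_{t−1} − ḡ_{t−1}‖² + (2β²L²/m) ∑_{i=1}^m ‖x_{i,t} − x_{i,t−1}‖² + 2(1−β)² σ²/m. -/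
set_option autoImplicit false

open MeasureTheory Finset BigOperators ProbabilityTheory

/-!
Write `Yᵢ` (`stormNoise`) for the centred contribution of node `i`, so that
`v̄_t - ḡ_t = β (v̄_{t-1} - ḡ_{t-1}) + m⁻¹ ∑ᵢ Yᵢ(ζᵢ)` with
`Yᵢ = β (wᵢ - E wᵢ) + (1 - β) (uᵢ - E uᵢ)`. The vectors `Yᵢ(ζᵢ)` are independent and centred, so
all cross terms vanish in expectation and
`E‖v̄_t - ḡ_t‖² = β² ‖v̄_{t-1} - ḡ_{t-1}‖² + m⁻² ∑ᵢ E‖Yᵢ‖²`.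
By `‖a + b‖² ≤ 2‖a‖² + 2‖b‖²`, and since a variance is at most the second moment,
`E‖Yᵢ‖² ≤ 2β² E‖wᵢ‖² + 2(1 - β)² σ² ≤ 2β² L² ‖x_{i,t} - x_{i,t-1}‖² + 2(1 - β)² σ²`;
finally `m⁻² ≤ m⁻¹`.
-/

section NormSq

variable {Ω E : Type*} [MeasurableSpace Ω] {μ : Measure Ω}

theorem integral_norm_add_sq_le [NormedAddCommGroup E] {f g : Ω → E}
    (hf : MemLp f 2 μ) (hg : MemLp g 2 μ) :
    ∫ ω, ‖f ω + g ω‖ ^ 2 ∂μ ≤ 2 * ∫ ω, ‖f ω‖ ^ 2 ∂μ + 2 * ∫ ω, ‖g ω‖ ^ 2 ∂μ := by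
  have hf2 := hf.integrable_norm_pow two_ne_zero
  have hg2 := hg.integrable_norm_pow two_ne_zero
  rw [← integral_const_mul, ← integral_const_mul,
    ← integral_add (hf2.const_mul 2) (hg2.const_mul 2)]
  refine integral_mono ((hf.add hg).integrable_norm_pow two_ne_zero)
    ((hf2.const_mul 2).add (hg2.const_mul 2)) fun ω => ?_
  calc ‖f ω + g ω‖ ^ 2 ≤ (‖f ω‖ + ‖g ω‖) ^ 2 := by gcongr; exact norm_add_le _ _
    _ ≤ 2 * ‖f ω‖ ^ 2 + 2 * ‖g ω‖ ^ 2 := by linarith [add_sq_le (a := ‖f ω‖) (b := ‖g ω‖)]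

variable [NormedAddCommGroup E] [InnerProductSpace ℝ E] [CompleteSpace E]

theorem integral_norm_add_sq_of_integral_eq_zero [IsProbabilityMeasure μ] {X : Ω → E}
    (hX : MemLp X 2 μ) (h0 : ∫ ω, X ω ∂μ = 0) (c : E) :
    ∫ ω, ‖c + X ω‖ ^ 2 ∂μ = ‖c‖ ^ 2 + ∫ ω, ‖X ω‖ ^ 2 ∂μ := by
  have hXi : Integrable X μ := hX.integrable one_le_two
  have hcross : Integrable (fun ω => 2 * inner ℝ c (X ω)) μ := (hXi.const_inner c).const_mul 2
  have hlin : Integrable (fun ω => ‖c‖ ^ 2 + 2 * inner ℝ c (X ω)) μ :=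
    (integrable_const _).add hcross
  simp_rw [norm_add_sq_real]
  rw [integral_add hlin (hX.integrable_norm_pow two_ne_zero),
    integral_add (integrable_const _) hcross, integral_const_mul, integral_inner hXi, h0]
  simp

theorem integral_norm_sub_integral_sq_le [IsProbabilityMeasure μ] {f : Ω → E}
    (hf : MemLp f 2 μ) :
    ∫ ω, ‖f ω - ∫ ω', f ω' ∂μ‖ ^ 2 ∂μ ≤ ∫ ω, ‖f ω‖ ^ 2 ∂μ := by
  have h0 : ∫ ω, (f ω - ∫ ω', f ω' ∂μ) ∂μ = 0 := by
    rw [integral_sub (hf.integrable one_le_two) (integrable_const _)]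
    simp
  have hc : MemLp (fun ω => f ω - ∫ ω', f ω' ∂μ) 2 μ := hf.sub (memLp_const _)
  have h := integral_norm_add_sq_of_integral_eq_zero hc h0 (∫ ω', f ω' ∂μ)
  simp only [add_sub_cancel] at h
  rw [h]
  exact le_add_of_nonneg_left (sq_nonneg _)

variable [MeasurableSpace E] [BorelSpace E]

theorem integral_norm_sum_sq_of_pairwise_indepFun [IsFiniteMeasure μ] {ι : Type*}
    (s : Finset ι) {X : ι → Ω → E} (hX : ∀ i, MemLp (X i) 2 μ) (h0 : ∀ i, ∫ ω, X i ω ∂μ = 0)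
    (hind : Pairwise fun i j => IndepFun (X i) (X j) μ) :
    ∫ ω, ‖∑ i ∈ s, X i ω‖ ^ 2 ∂μ = ∑ i ∈ s, ∫ ω, ‖X i ω‖ ^ 2 ∂μ := by
  have hint : ∀ i j, Integrable (fun ω => inner ℝ (X i ω) (X j ω)) μ := by
    intro i j
    rcases eq_or_ne i j with rfl | hij
    · simpa only [real_inner_self_eq_norm_sq] using (hX i).integrable_norm_pow two_ne_zero
    · exact (hind hij).integrable_bilin ((hX i).integrable one_le_two)
        ((hX j).integrable one_le_two) (innerSL ℝ)
  have hcross : ∀ i j, i ≠ j → ∫ ω, inner ℝ (X i ω) (X j ω) ∂μ = 0 := fun i j hij =>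
    ((hind hij).integral_bilin ((hX i).integrable one_le_two)
      ((hX j).integrable one_le_two) (innerSL ℝ)).trans (by simp [h0])
  calc ∫ ω, ‖∑ i ∈ s, X i ω‖ ^ 2 ∂μ
      = ∫ ω, ∑ i ∈ s, ∑ j ∈ s, inner ℝ (X i ω) (X j ω) ∂μ := by
        simp_rw [← real_inner_self_eq_norm_sq, sum_inner, inner_sum]
    _ = ∑ i ∈ s, ∑ j ∈ s, ∫ ω, inner ℝ (X i ω) (X j ω) ∂μ := by
        rw [integral_finsetSum _ fun i _ => integrable_finsetSum _ fun j _ => hint i j]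
        exact sum_congr rfl fun i _ => integral_finsetSum _ fun j _ => hint i j
    _ = ∑ i ∈ s, ∫ ω, inner ℝ (X i ω) (X i ω) ∂μ :=
        sum_congr rfl fun i hi => sum_eq_single_of_mem i hi fun j _ hji => hcross i j hji.symm
    _ = ∑ i ∈ s, ∫ ω, ‖X i ω‖ ^ 2 ∂μ := by simp_rw [real_inner_self_eq_norm_sq]

theorem ProbabilityTheory.iIndepFun.integral_norm_add_smul_sum_comp_sq [IsProbabilityMeasure μ]
    {ι Z : Type*} [Fintype ι] [MeasurableSpace Z] {ζ : ι → Ω → Z} {D : ι → Measure Z}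
    (hζ : ∀ i, AEMeasurable (ζ i) μ) (hlaw : ∀ i, μ.map (ζ i) = D i) (hind : iIndepFun ζ μ)
    {Y : ι → Z → E} (hY : ∀ i, MemLp (Y i) 2 (D i)) (h0 : ∀ i, ∫ z, Y i z ∂(D i) = 0)
    (c : E) (a : ℝ) :
    ∫ ω, ‖c + a • ∑ i, Y i (ζ i ω)‖ ^ 2 ∂μ = ‖c‖ ^ 2 + a ^ 2 * ∑ i, ∫ z, ‖Y i z‖ ^ 2 ∂(D i) := by
  simp only [← hlaw] at hY h0 ⊢
  have hX i : MemLp (fun ω => Y i (ζ i ω)) 2 μ := (hY i).comp_of_map (hζ i)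
  have hX0 i : ∫ ω, Y i (ζ i ω) ∂μ = 0 := by rw [← integral_map (hζ i) (hY i).1, h0]
  have hXind : Pairwise fun i j => IndepFun (fun ω => Y i (ζ i ω)) (fun ω => Y j (ζ j ω)) μ :=
    fun i j hij => (hind.indepFun hij).comp₀ (hζ i) (hζ j) (hY i).1.aemeasurable
      (hY j).1.aemeasurable
  have hsum : MemLp (fun ω => a • ∑ i, Y i (ζ i ω)) 2 μ :=
    (memLp_finsetSum _ fun i _ => hX i).const_smul a
  have hsum0 : ∫ ω, a • ∑ i, Y i (ζ i ω) ∂μ = 0 := by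
    rw [integral_smul, integral_finsetSum _ fun i _ => (hX i).integrable one_le_two]
    simp [hX0]
  rw [integral_norm_add_sq_of_integral_eq_zero hsum hsum0]
  simp_rw [norm_smul, mul_pow, Real.norm_eq_abs, sq_abs]
  rw [integral_const_mul, integral_norm_sum_sq_of_pairwise_indepFun _ hX hX0 hXind]
  congr 2
  exact sum_congr rfl fun i _ => (integral_map (hζ i) ((hY i).1.norm.pow 2)).symm

end NormSq

theorem inv_natCast_sq_mul_sum_le {m : ℕ} {f a : Fin m → ℝ} {b c : ℝ} (hc : 0 ≤ c)
    (ha : ∀ i, 0 ≤ a i) (hf : ∀ i, f i ≤ c * a i + b) :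
    ((m : ℝ)⁻¹) ^ 2 * ∑ i, f i ≤ c / m * ∑ i, a i + b / m := by
  have hsum : ∑ i, f i ≤ c * ∑ i, a i + m * b :=
    (sum_le_sum fun i _ => hf i).trans_eq (by simp [sum_add_distrib, mul_sum])
  have hca : 0 ≤ c * ∑ i, a i := mul_nonneg hc (sum_nonneg fun i _ => ha i)
  rcases Nat.eq_zero_or_pos m with rfl | hm
  · simp
  have hm' : (1 : ℝ) ≤ m := by exact_mod_cast hm
  calc ((m : ℝ)⁻¹) ^ 2 * ∑ i, f i ≤ ((m : ℝ)⁻¹) ^ 2 * (c * ∑ i, a i + m * b) := by gcongr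
    _ = c * (∑ i, a i) / m ^ 2 + b / m := by field_simp
    _ ≤ c * (∑ i, a i) / m + b / m := by
      gcongr ?_ + _
      exact div_le_div_of_nonneg_left hca (by linarith) (by nlinarith)
    _ = c / m * ∑ i, a i + b / m := by ring

section Storm

variable {Z E : Type*} [MeasurableSpace Z] {μ : Measure Z} [NormedAddCommGroup E]

noncomputable def stormNoise [NormedSpace ℝ E] (μ : Measure Z) (β : ℝ) (u v : Z → E)
    (z : Z) : E :=
  β • (u z - v z - (∫ y, u y ∂μ - ∫ y, v y ∂μ)) + (1 - β) • (u z - ∫ y, u y ∂μ)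

variable {β : ℝ} {u v : Z → E}

theorem memLp_stormNoise [NormedSpace ℝ E] [IsFiniteMeasure μ] (hu : MemLp u 2 μ)
    (hv : MemLp v 2 μ) : MemLp (stormNoise μ β u v) 2 μ :=
  (((hu.sub hv).sub (memLp_const _)).const_smul β).add
    ((hu.sub (memLp_const _)).const_smul (1 - β))

theorem integral_stormNoise [NormedSpace ℝ E] [CompleteSpace E] [IsProbabilityMeasure μ]
    (hu : Integrable u μ) (hv : Integrable v μ) : ∫ z, stormNoise μ β u v z ∂μ = 0 := by
  have hw : Integrable (fun z => u z - v z) μ := hu.sub hv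
  have hw' : Integrable (fun z => β • (u z - v z - (∫ y, u y ∂μ - ∫ y, v y ∂μ))) μ :=
    (hw.sub (integrable_const _)).smul β
  have hu' : Integrable (fun z => (1 - β) • (u z - ∫ y, u y ∂μ)) μ :=
    (hu.sub (integrable_const _)).smul (1 - β)
  simp only [stormNoise]
  rw [integral_add hw' hu', integral_smul, integral_smul, integral_sub hw (integrable_const _),
    integral_sub hu (integrable_const _), integral_sub hu hv]
  simp

theorem integral_norm_stormNoise_sq_le [InnerProductSpace ℝ E] [CompleteSpace E]
    [IsProbabilityMeasure μ] (hu : MemLp u 2 μ) (hv : MemLp v 2 μ) :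
    ∫ z, ‖stormNoise μ β u v z‖ ^ 2 ∂μ
      ≤ 2 * β ^ 2 * ∫ z, ‖u z - v z‖ ^ 2 ∂μ
        + 2 * (1 - β) ^ 2 * ∫ z, ‖u z - ∫ y, u y ∂μ‖ ^ 2 ∂μ := by
  have hw : MemLp (fun z => u z - v z) 2 μ := hu.sub hv
  have hvar := integral_norm_sub_integral_sq_le hw
  rw [integral_sub (hu.integrable one_le_two) (hv.integrable one_le_two)] at hvar
  calc ∫ z, ‖stormNoise μ β u v z‖ ^ 2 ∂μ
      ≤ 2 * ∫ z, ‖β • (u z - v z - (∫ y, u y ∂μ - ∫ y, v y ∂μ))‖ ^ 2 ∂μ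
        + 2 * ∫ z, ‖(1 - β) • (u z - ∫ y, u y ∂μ)‖ ^ 2 ∂μ :=
        integral_norm_add_sq_le ((hw.sub (memLp_const _)).const_smul β)
          ((hu.sub (memLp_const _)).const_smul (1 - β))
    _ = 2 * β ^ 2 * ∫ z, ‖u z - v z - (∫ y, u y ∂μ - ∫ y, v y ∂μ)‖ ^ 2 ∂μ
        + 2 * (1 - β) ^ 2 * ∫ z, ‖u z - ∫ y, u y ∂μ‖ ^ 2 ∂μ := by
        simp_rw [norm_smul, mul_pow, Real.norm_eq_abs, sq_abs, integral_const_mul, mul_assoc]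
    _ ≤ _ := by gcongr

end Storm

theorem gt_storm_gradient_estimator_error_general
    (m p : ℕ)
    (Z : Type) [MeasurableSpace Z]
    (Ω : Type) [MeasurableSpace Ω] (P : Measure Ω) [IsProbabilityMeasure P]
    (D : Fin m → Measure Z)
    (ζ : Fin m → Ω → Z)
    (hζmeas : ∀ i, Measurable (ζ i))
    (hζlaw : ∀ i, Measure.map (ζ i) P = D i)
    (hζindep : ProbabilityTheory.iIndepFun ζ P)
    (g : Fin m → EuclideanSpace ℝ (Fin p) → Z → EuclideanSpace ℝ (Fin p))
    (hgint : ∀ i x, Integrable (g i x) (D i))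
    (hgsqint : ∀ i x, Integrable (fun z => ‖g i x z‖ ^ 2) (D i))
    (Gpop : Fin m → EuclideanSpace ℝ (Fin p) → EuclideanSpace ℝ (Fin p))
    (hGpop : ∀ i x, Gpop i x = ∫ z, g i x z ∂(D i))
    (σ L : ℝ)
    (hvar : ∀ i x, ∫ z, ‖g i x z - Gpop i x‖ ^ 2 ∂(D i) ≤ σ ^ 2)
    (hsmooth : ∀ i x y, ∫ z, ‖g i x z - g i y z‖ ^ 2 ∂(D i) ≤ L ^ 2 * ‖x - y‖ ^ 2)
    (xprev xcur : Fin m → EuclideanSpace ℝ (Fin p))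
    (vbarprev : EuclideanSpace ℝ (Fin p))
    (β : ℝ)
    (gbarcur gbarprev : EuclideanSpace ℝ (Fin p))
    (hgbarcur : gbarcur = (m : ℝ)⁻¹ • ∑ i, Gpop i (xcur i))
    (hgbarprev : gbarprev = (m : ℝ)⁻¹ • ∑ i, Gpop i (xprev i))
    (vbar : Ω → EuclideanSpace ℝ (Fin p))
    (hvbar : ∀ ω, vbar ω
      = β • (vbarprev + (m : ℝ)⁻¹ • ∑ i, (g i (xcur i) (ζ i ω) - g i (xprev i) (ζ i ω)))
        + (1 - β) • ((m : ℝ)⁻¹ • ∑ i, g i (xcur i) (ζ i ω))) :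
    ∫ ω, ‖vbar ω - gbarcur‖ ^ 2 ∂P
      ≤ β ^ 2 * ‖vbarprev - gbarprev‖ ^ 2
        + (2 * β ^ 2 * L ^ 2 / m) * ∑ i, ‖xcur i - xprev i‖ ^ 2
        + 2 * (1 - β) ^ 2 * σ ^ 2 / m := by
  have hD i : IsProbabilityMeasure (D i) :=
    hζlaw i ▸ Measure.isProbabilityMeasure_map (hζmeas i).aemeasurable
  have hg2 i x : MemLp (g i x) 2 (D i) :=
    (memLp_two_iff_integrable_sq_norm (hgint i x).1).2 (hgsqint i x)
  set Y := fun i => stormNoise (D i) β (g i (xcur i)) (g i (xprev i))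
  have hdecomp ω : vbar ω - gbarcur
      = β • (vbarprev - gbarprev) + (m : ℝ)⁻¹ • ∑ i, Y i (ζ i ω) := by
    simp only [hvbar, hgbarcur, hgbarprev, Y, stormNoise, ← hGpop, sum_add_distrib,
      sum_sub_distrib, ← smul_sum]
    module
  have hnode i : ∫ z, ‖Y i z‖ ^ 2 ∂(D i)
      ≤ 2 * β ^ 2 * L ^ 2 * ‖xcur i - xprev i‖ ^ 2 + 2 * (1 - β) ^ 2 * σ ^ 2 := by
    refine (integral_norm_stormNoise_sq_le (hg2 i _) (hg2 i _)).trans ?_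
    rw [← hGpop, mul_assoc (2 * β ^ 2)]
    gcongr
    exacts [hsmooth i _ _, hvar i _]
  calc ∫ ω, ‖vbar ω - gbarcur‖ ^ 2 ∂P
      = β ^ 2 * ‖vbarprev - gbarprev‖ ^ 2
        + ((m : ℝ)⁻¹) ^ 2 * ∑ i, ∫ z, ‖Y i z‖ ^ 2 ∂(D i) := by
        simp_rw [hdecomp]
        rw [hζindep.integral_norm_add_smul_sum_comp_sq (fun i => (hζmeas i).aemeasurable) hζlaw
          (fun i => memLp_stormNoise (hg2 i _) (hg2 i _))
          (fun i => integral_stormNoise (hgint i _) (hgint i _)), norm_smul, mul_pow,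
          Real.norm_eq_abs, sq_abs]
    _ ≤ _ := by
        rw [add_assoc]
        gcongr
        exact inv_natCast_sq_mul_sum_le (by positivity) (fun i => sq_nonneg _) hnode

/-- **Error of gradient estimator, Lemma 1.**
Let `ζ₁,…,ζ_m` be mutually independent random samples with `ζᵢ ∼ Dᵢ`, and let
`g i x ζ = ∇fᵢ(x;ζ)` be stochastic gradients with population gradients
`Gpop i x = E_{ζ∼Dᵢ}[g i x ζ]`, satisfying bounded variance (`σ²`) and `L`-average smoothness.
Fix deterministic points `x_{i,t-1}, x_{i,t}`, a deterministic `v̄_{t-1}` and `β ∈ [0,1]`, and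
let `v̄_t = β(v̄_{t-1} + w̄) + (1−β)ū` where `uᵢ = g i x_{i,t} ζᵢ`,
`wᵢ = g i x_{i,t} ζᵢ − g i x_{i,t-1} ζᵢ` and bars denote averages over `i`.  Then
`E‖v̄_t − ḡ_t‖² ≤ β²‖v̄_{t-1} − ḡ_{t-1}‖² + (2β²L²/m)∑ᵢ‖x_{i,t} − x_{i,t-1}‖² + 2(1−β)²σ²/m`. -/
theorem gt_storm_gradient_estimator_error
    (m p : ℕ) (hm : 1 ≤ m)
    (Z : Type) [MeasurableSpace Z]
    (Ω : Type) [MeasurableSpace Ω] (P : Measure Ω) [IsProbabilityMeasure P]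
    (D : Fin m → Measure Z) (hD : ∀ i, IsProbabilityMeasure (D i))
    (ζ : Fin m → Ω → Z)
    (hζmeas : ∀ i, Measurable (ζ i))
    (hζlaw : ∀ i, Measure.map (ζ i) P = D i)
    (hζindep : ProbabilityTheory.iIndepFun ζ P)
    (g : Fin m → EuclideanSpace ℝ (Fin p) → Z → EuclideanSpace ℝ (Fin p))
    (hgint : ∀ i x, Integrable (g i x) (D i))
    (hgsqint : ∀ i x, Integrable (fun z => ‖g i x z‖ ^ 2) (D i))
    (Gpop : Fin m → EuclideanSpace ℝ (Fin p) → EuclideanSpace ℝ (Fin p))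
    (hGpop : ∀ i x, Gpop i x = ∫ z, g i x z ∂(D i))
    (σ L : ℝ)
    (hvar : ∀ i x, ∫ z, ‖g i x z - Gpop i x‖ ^ 2 ∂(D i) ≤ σ ^ 2)
    (hsmooth : ∀ i x y, ∫ z, ‖g i x z - g i y z‖ ^ 2 ∂(D i) ≤ L ^ 2 * ‖x - y‖ ^ 2)
    (xprev xcur : Fin m → EuclideanSpace ℝ (Fin p))
    (vbarprev : EuclideanSpace ℝ (Fin p))
    (β : ℝ) (hβ : β ∈ Set.Icc (0 : ℝ) 1)
    (gbarcur gbarprev : EuclideanSpace ℝ (Fin p))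
    (hgbarcur : gbarcur = (m : ℝ)⁻¹ • ∑ i, Gpop i (xcur i))
    (hgbarprev : gbarprev = (m : ℝ)⁻¹ • ∑ i, Gpop i (xprev i))
    (vbar : Ω → EuclideanSpace ℝ (Fin p))
    (hvbar : ∀ ω, vbar ω
      = β • (vbarprev + (m : ℝ)⁻¹ • ∑ i, (g i (xcur i) (ζ i ω) - g i (xprev i) (ζ i ω)))
        + (1 - β) • ((m : ℝ)⁻¹ • ∑ i, g i (xcur i) (ζ i ω))) :
    ∫ ω, ‖vbar ω - gbarcur‖ ^ 2 ∂P
      ≤ β ^ 2 * ‖vbarprev - gbarprev‖ ^ 2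
        + (2 * β ^ 2 * L ^ 2 / m) * ∑ i, ‖xcur i - xprev i‖ ^ 2
        + 2 * (1 - β) ^ 2 * σ ^ 2 / m :=
  gt_storm_gradient_estimator_error_general m p Z Ω P D ζ hζmeas hζlaw hζindep g hgint hgsqint Gpop
    hGpop σ L hvar hsmooth xprev xcur vbarprev β gbarcur gbarprev hgbarcur hgbarprev vbar hvbar
end
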